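/- Let G be a finite group with r ≥ 2 irreducible characters. If there exists 1 ≤ t ≤ r−1 such that L_t(G) ≥ C(r,t) − C(r−2,t−1) + 1, then G is almost monomial. -/

import Mathlib

open scoped Classical

noncomputable section

/-- The inner product of two class functions on a finite group. -/
def cdot (G : Type*) [Group G] [Finite G] (f h : G → ℂ) : ℂ :=
  (Nat.card G : ℂ)⁻¹ * ∑ᶠ g : G, f g * (starRingEnd ℂ) (h g)

/-- `f` is the character of a finite-dimensional complex representation of `G`. -/
def IsChar (G : Type*) [Group G] (f : G → ℂ) : Prop :=
  ∃ (n : ℕ) (ρ : G →* Matrix.GeneralLinearGroup (Fin n) ℂ),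
    f = fun g => Matrix.trace ((ρ g : Matrix (Fin n) (Fin n) ℂ))

/-- `f` is a linear (degree one) character of `G`. -/
def IsLinearChar (G : Type*) [Group G] (f : G → ℂ) : Prop :=
  ∃ ρ : G →* ℂˣ, f = fun g => (ρ g : ℂ)

/-- `f` is an irreducible character of `G`: a character of norm one. -/
def IsIrrChar (G : Type*) [Group G] [Finite G] (f : G → ℂ) : Prop :=
  IsChar G f ∧ cdot G f f = 1

/-- The class function on `G` induced from a class function on a subgroup `H`. -/
def ind {G : Type*} [Group G] [Finite G] (H : Subgroup G) (f : H → ℂ) : G → ℂ :=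
  fun g => (Nat.card H : ℂ)⁻¹ *
    ∑ᶠ x : G, if h : x * g * x⁻¹ ∈ H then f ⟨x * g * x⁻¹, h⟩ else 0

/-- Restriction of a class function on `G` to a subgroup `H`. -/
def res {G : Type*} [Group G] (H : Subgroup G) (f : G → ℂ) : H → ℂ := fun x => f x

/-- Restriction of a class function on a subgroup `K` to a smaller subgroup `H ≤ K`. -/
def resTo {G : Type*} [Group G] {K H : Subgroup G} (hHK : H ≤ K) (f : K → ℂ) : H → ℂ :=
  fun x => f ⟨x.1, hHK x.2⟩

/-- Induction of a class function from a subgroup `H` to a larger subgroup `K`. -/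
def indTo {G : Type*} [Group G] [Finite G] (K H : Subgroup G) (f : H → ℂ) : K → ℂ :=
  ind (H.subgroupOf K) fun y => f ⟨y.1.1, Subgroup.mem_subgroupOf.mp y.2⟩

/-- `G` is almost monomial. -/
def IsAlmostMonomial (G : Type*) [Group G] [Finite G] : Prop :=
  ∀ χ φ : G → ℂ, IsIrrChar G χ → IsIrrChar G φ → χ ≠ φ →
    ∃ (H : Subgroup G) (l : H → ℂ), IsLinearChar H l ∧
      cdot G (ind H l) χ ≠ 0 ∧ cdot G (ind H l) φ = 0

/-- `G` is relative almost monomial with respect to the (normal) subgroup `N`. -/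
def IsRelAlmostMonomial (G : Type*) [Group G] [Finite G] (N : Subgroup G) : Prop :=
  ∀ χ φ : G → ℂ, IsIrrChar G χ → IsIrrChar G φ → χ ≠ φ →
    ∃ (H : Subgroup G) (hNH : N ≤ H) (ψ : H → ℂ), IsIrrChar H ψ ∧
      IsIrrChar N (resTo hNH ψ) ∧
      cdot G (ind H ψ) χ ≠ 0 ∧ cdot G (ind H ψ) φ = 0

/-- `H` is a subnormal subgroup of `G`. -/
def IsSubnormalSubgroup (G : Type*) [Group G] (H : Subgroup G) : Prop :=
  ∃ (n : ℕ) (c : Fin (n + 1) → Subgroup G), c 0 = H ∧ c (Fin.last n) = ⊤ ∧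
    ∀ i : Fin n, ((c i.castSucc).subgroupOf (c i.succ)).Normal

/-- `G` is normally almost monomial. -/
def IsNormallyAlmostMonomial (G : Type*) [Group G] [Finite G] : Prop :=
  ∀ χ φ : G → ℂ, IsIrrChar G χ → IsIrrChar G φ → χ ≠ φ →
    ∃ (H : Subgroup G), H.Normal ∧ ∃ l : H → ℂ, IsLinearChar H l ∧
      cdot G (ind H l) χ ≠ 0 ∧ cdot G (ind H l) φ = 0

/-- `G` is subnormally almost monomial. -/
def IsSubnormallyAlmostMonomial (G : Type*) [Group G] [Finite G] : Prop :=
  ∀ χ φ : G → ℂ, IsIrrChar G χ → IsIrrChar G φ → χ ≠ φ →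
    ∃ (H : Subgroup G), IsSubnormalSubgroup G H ∧ ∃ l : H → ℂ, IsLinearChar H l ∧
      cdot G (ind H l) χ ≠ 0 ∧ cdot G (ind H l) φ = 0

/-- `G` is quasi-monomial. -/
def IsQuasiMonomial (G : Type*) [Group G] [Finite G] : Prop :=
  ∀ χ : G → ℂ, IsIrrChar G χ → ∃ (H : Subgroup G) (l : H → ℂ) (d : ℕ),
    IsLinearChar H l ∧ 1 ≤ d ∧ ind H l = fun g => (d : ℂ) * χ g

/-- The set of irreducible characters of `G`. -/
def IrrSet (G : Type*) [Group G] [Finite G] : Set (G → ℂ) := {χ | IsIrrChar G χ}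

/-- `f` belongs to the semigroup `M(G)` generated by monomial characters. -/
def InMG (G : Type*) [Group G] [Finite G] (f : G → ℂ) : Prop :=
  ∃ (k : ℕ) (H : Fin (k + 1) → Subgroup G) (l : ∀ i, (H i) → ℂ),
    (∀ i, IsLinearChar (H i) (l i)) ∧ f = fun g => ∑ i, ind (H i) (l i) g

/-- The set of irreducible constituents of a class function `f`. -/
def Cons (G : Type*) [Group G] [Finite G] (f : G → ℂ) : Set (G → ℂ) :=
  {φ | IsIrrChar G φ ∧ cdot G φ f ≠ 0}

/-- `L_t(G)`: the number of constituent-sets of size `t` of characters in `M(G)`. -/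
def Lt (G : Type*) [Group G] [Finite G] (t : ℕ) : ℕ :=
  Nat.card {S : Set (G → ℂ) // ∃ f, InMG G f ∧ Cons G f = S ∧ Nat.card S = t}

end

/-!
Suppose `G` is not almost monomial: there are irreducible characters `χ ≠ φ` such that every
monomial character `λ^G` having `χ` as a constituent also has `φ`. For a linear character `λ` of
`H` and any character `ψ` of `G`, Frobenius reciprocity gives `⟨λ^G, ψ⟩ = ⟨λ, ψ_H⟩`, which is the
dimension of the invariants of the twisted representation `λ⁻¹ ⊗ ψ_H`, hence a natural number.
So there is no cancellation in sums of monomial characters, and every constituent set `Cons(χ')`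
with `χ' ∈ M(G)` that contains `χ` also contains `φ`. Constituent sets of size `t` are therefore
among the `t`-subsets of `Irr(G)` other than those containing `χ` but not `φ`; there are
`C(r, t) - C(r - 2, t - 1)` of them, contradicting the bound on `L_t(G)`.
-/

open Finset

section CharacterTheory

variable {G : Type*} [Group G]

lemma IsChar.apply_conj {χ : G → ℂ} (hχ : IsChar G χ) (x g : G) : χ (x * g * x⁻¹) = χ g := by
  obtain ⟨n, ρ, rfl⟩ := hχ
  simp only [map_mul, map_inv, Units.val_mul]
  exact Matrix.trace_units_conj (ρ x) (ρ g)

lemma IsChar.res {χ : G → ℂ} (hχ : IsChar G χ) (H : Subgroup G) : IsChar H (res H χ) := by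
  obtain ⟨n, ρ, rfl⟩ := hχ
  exact ⟨n, ρ.comp H.subtype, rfl⟩

lemma conj_coe_monoidHom_apply [Finite G] (μ : G →* ℂˣ) (g : G) :
    starRingEnd ℂ (μ g) = ↑(μ g)⁻¹ := by
  have hpow : (μ g : ℂ) ^ orderOf g = 1 := by
    rw [← Units.val_pow_eq_pow_val, ← map_pow, pow_orderOf_eq_one, map_one, Units.val_one]
  rw [Units.val_inv_eq_inv_val,
    Complex.inv_eq_conj (Complex.norm_eq_one_of_pow_eq_one hpow (orderOf_pos g).ne')]

lemma exists_natCast_eq_card_inv_mul_sum_trace {k ι : Type*} [Field k] [CharZero k] [Fintype G]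
    [Fintype ι] [DecidableEq ι] (σ : G →* Matrix ι ι k) :
    ∃ m : ℕ, (Nat.card G : k)⁻¹ * ∑ g, (σ g).trace = m := by
  have : Invertible (Nat.card G : k) := invertibleOfNonzero (by simp)
  let ρ : Representation k G (ι → k) := Matrix.toLinAlgEquiv'.toRingEquiv.toMonoidHom.comp σ
  refine ⟨_, Eq.trans ?_ ρ.card_inv_mul_sum_char_eq_finrank⟩
  congr 1
  exact Finset.sum_congr rfl fun g _ => (Matrix.trace_toLin'_eq (σ g)).symm

lemma IsChar.exists_cdot_eq_natCast [Finite G] {χ l : G → ℂ} (hχ : IsChar G χ)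
    (hl : IsLinearChar G l) : ∃ m : ℕ, cdot G χ l = m := by
  have := Fintype.ofFinite G
  obtain ⟨n, ρ, rfl⟩ := hχ
  obtain ⟨μ, rfl⟩ := hl
  -- `⟨χ, μ⟩` is the average character of the twist `μ⁻¹ ⊗ ρ`
  let σ : G →* Matrix (Fin n) (Fin n) ℂ :=
    { toFun := fun g => (↑(μ g)⁻¹ : ℂ) • (ρ g : Matrix (Fin n) (Fin n) ℂ)
      map_one' := by simp
      map_mul' := fun a b => by
        simp only [map_mul, mul_inv_rev, Units.val_mul, Matrix.smul_mul, Matrix.mul_smul,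
          smul_smul, mul_comm] }
  obtain ⟨m, hm⟩ := exists_natCast_eq_card_inv_mul_sum_trace σ
  refine ⟨m, ?_⟩
  rw [← hm, cdot, finsum_eq_sum_of_fintype]
  simp [σ, conj_coe_monoidHom_apply, Matrix.trace_smul, mul_comm]

lemma sum_dite_mem_mul [Fintype G] (H : Subgroup G) (f : H → ℂ) (c : G → ℂ) :
    ∑ g : G, (if hg : g ∈ H then f ⟨g, hg⟩ else 0) * c g = ∑ h : H, f h * c h := by
  rw [← Fintype.sum_subtype_add_sum_subtype (· ∈ H)]
  simp +contextual [Finset.sum_eq_zero]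

end CharacterTheory

section InnerProduct

variable {G : Type*} [Group G] [Finite G]

lemma cdot_conj_symm (f h : G → ℂ) : starRingEnd ℂ (cdot G h f) = cdot G f h := by
  have := Fintype.ofFinite G
  simp only [cdot, finsum_eq_sum_of_fintype, map_mul, map_sum, map_inv₀, map_natCast,
    Complex.conj_conj, mul_comm (f _)]

lemma cdot_ne_zero_comm {f h : G → ℂ} : cdot G f h ≠ 0 ↔ cdot G h f ≠ 0 := by
  rw [← cdot_conj_symm, map_ne_zero]

lemma cdot_sum_right {k : ℕ} (f : G → ℂ) (F : Fin k → G → ℂ) :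
    cdot G f (fun g => ∑ i, F i g) = ∑ i, cdot G f (F i) := by
  have := Fintype.ofFinite G
  simp only [cdot, finsum_eq_sum_of_fintype, map_sum, Finset.mul_sum]
  exact Finset.sum_comm

lemma cdot_ind_eq_cdot_res (H : Subgroup G) (f : H → ℂ) {χ : G → ℂ}
    (hχ : ∀ x g : G, χ (x * g * x⁻¹) = χ g) :
    cdot G (ind H f) χ = cdot H f (res H χ) := by
  have := Fintype.ofFinite G
  set F : G → ℂ := fun g => if hg : g ∈ H then f ⟨g, hg⟩ else 0
  have hconj (x : G) :
      ∑ g, F (x * g * x⁻¹) * starRingEnd ℂ (χ g) = ∑ g, F g * starRingEnd ℂ (χ g) :=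
    Fintype.sum_equiv (MulAut.conj x).toEquiv _ _ fun g => by simp [hχ]
  calc cdot G (ind H f) χ
      = (Nat.card G : ℂ)⁻¹ * ((Nat.card H : ℂ)⁻¹ *
          ∑ x, ∑ g, F (x * g * x⁻¹) * starRingEnd ℂ (χ g)) := by
        simp only [cdot, ind, finsum_eq_sum_of_fintype, Finset.mul_sum, Finset.sum_mul, mul_assoc]
        rw [Finset.sum_comm]
    _ = (Nat.card H : ℂ)⁻¹ * ∑ g, F g * starRingEnd ℂ (χ g) := by
        simp only [hconj, Finset.sum_const, Finset.card_univ, nsmul_eq_mul,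
          Fintype.card_eq_nat_card]
        field_simp
    _ = cdot H f (res H χ) := by
        rw [sum_dite_mem_mul, cdot, finsum_eq_sum_of_fintype]
        rfl

end InnerProduct

section Monomial

variable {G : Type*} [Group G] [Finite G]

lemma IsChar.exists_cdot_ind_eq_natCast {ψ : G → ℂ} (hψ : IsChar G ψ) {H : Subgroup G}
    {l : H → ℂ} (hl : IsLinearChar H l) : ∃ m : ℕ, cdot G ψ (ind H l) = m := by
  obtain ⟨m, hm⟩ := (hψ.res H).exists_cdot_eq_natCast hl
  refine ⟨m, ?_⟩
  rw [← cdot_conj_symm, cdot_ind_eq_cdot_res H l hψ.apply_conj, cdot_conj_symm, hm]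

lemma IsChar.cdot_sum_ind_ne_zero_iff {ψ : G → ℂ} (hψ : IsChar G ψ) {k : ℕ}
    {H : Fin k → Subgroup G} {l : ∀ i, H i → ℂ} (hl : ∀ i, IsLinearChar (H i) (l i)) :
    cdot G ψ (fun g => ∑ i, ind (H i) (l i) g) ≠ 0 ↔ ∃ i, cdot G ψ (ind (H i) (l i)) ≠ 0 := by
  choose m hm using fun i => hψ.exists_cdot_ind_eq_natCast (hl i)
  simp only [cdot_sum_right, hm, ← Nat.cast_sum, ne_eq, Nat.cast_eq_zero,
    Finset.sum_eq_zero_iff, Finset.mem_univ, true_implies, not_forall]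

lemma mem_cons_of_mem_cons_of_inMG {χ φ : G → ℂ} (hφ : IsIrrChar G φ)
    (hχφ : ∀ (H : Subgroup G) (l : H → ℂ), IsLinearChar H l →
      cdot G (ind H l) χ ≠ 0 → cdot G (ind H l) φ ≠ 0)
    {f : G → ℂ} (hf : InMG G f) (hχ : χ ∈ Cons G f) : φ ∈ Cons G f := by
  obtain ⟨k, H, l, hl, rfl⟩ := hf
  obtain ⟨i, hi⟩ := (hχ.1.1.cdot_sum_ind_ne_zero_iff hl).1 hχ.2
  exact ⟨hφ, (hφ.1.cdot_sum_ind_ne_zero_iff hl).2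
    ⟨i, cdot_ne_zero_comm.2 (hχφ _ _ (hl i) (cdot_ne_zero_comm.1 hi))⟩⟩

lemma Lt_le_card_filter_powersetCard {I : Finset (G → ℂ)} (hI : (I : Set (G → ℂ)) = IrrSet G)
    (t : ℕ) (P : Finset (G → ℂ) → Prop) [DecidablePred P]
    (hP : ∀ f, InMG G f → ∀ s : Finset (G → ℂ), ↑s = Cons G f → P s) :
    Lt G t ≤ #{s ∈ I.powersetCard t | P s} := by
  set 𝒮 : Set (Set (G → ℂ)) := {S | ∃ f, InMG G f ∧ Cons G f = S ∧ Nat.card S = t}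
  have h𝒮 : 𝒮 ⊆ {s ∈ I.powersetCard t | P s}.image ((↑) : Finset (G → ℂ) → Set (G → ℂ)) := by
    rintro _ ⟨f, hf, rfl, hcard⟩
    have hfin : (Cons G f).Finite := I.finite_toSet.subset (hI ▸ fun _ hφ => hφ.1)
    refine Finset.mem_image.2 ⟨hfin.toFinset, Finset.mem_filter.2 ⟨?_, ?_⟩, hfin.coe_toFinset⟩
    · refine Finset.mem_powersetCard.2 ⟨?_, ?_⟩
      · rw [hfin.toFinset_subset, hI]
        exact fun _ hφ => hφ.1
      · rw [← hcard, Nat.card_eq_card_finite_toFinset hfin]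
    · exact hP f hf _ hfin.coe_toFinset
  calc Lt G t = 𝒮.ncard := Nat.card_coe_set_eq 𝒮
    _ ≤ _ := Set.ncard_le_ncard h𝒮 (Finset.finite_toSet _)
    _ = _ := Set.ncard_coe_finset _
    _ ≤ _ := Finset.card_image_le

end Monomial

lemma Finset.card_powersetCard_filter_imp_le {α : Type*} [DecidableEq α] {I : Finset α} {a b : α}
    (ha : a ∈ I) (hb : b ∈ I) (hab : a ≠ b) {t : ℕ} (ht : 1 ≤ t) :
    #{s ∈ I.powersetCard t | a ∈ s → b ∈ s} ≤ (#I).choose t - (#I - 2).choose (t - 1) := by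
  set J := (I.erase a).erase b
  have hJ : #J = #I - 2 := by
    rw [card_erase_of_mem (mem_erase.2 ⟨hab.symm, hb⟩), card_erase_of_mem ha, Nat.sub_sub]
  have haJ : a ∉ J := fun h => (mem_erase.1 (mem_erase.1 h).2).1 rfl
  have hbJ : b ∉ J := fun h => (mem_erase.1 h).1 rfl
  have hlower : (#I - 2).choose (t - 1) ≤ #{s ∈ I.powersetCard t | ¬(a ∈ s → b ∈ s)} := by
    rw [← hJ, ← card_powersetCard]
    refine card_le_card_of_injOn (insert a) (fun u hu => ?_) (fun u hu v hv huv => ?_)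
    · obtain ⟨huJ, hu⟩ := mem_powersetCard.1 hu
      refine mem_filter.2 ⟨mem_powersetCard.2 ⟨insert_subset ha ?_, ?_⟩, ?_⟩
      · exact huJ.trans ((erase_subset _ _).trans (erase_subset _ _))
      · rw [card_insert_of_notMem fun h => haJ (huJ h), hu]
        omega
      · simpa [hab.symm] using fun h => hbJ (huJ h)
    · have hau : a ∉ u := fun h => haJ ((mem_powersetCard.1 hu).1 h)
      have hav : a ∉ v := fun h => haJ ((mem_powersetCard.1 hv).1 h)
      rw [← erase_insert hau, huv, erase_insert hav]
  have hsplit := card_filter_add_card_filter_not (s := I.powersetCard t)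
    (p := fun s => a ∈ s → b ∈ s)
  rw [card_powersetCard] at hsplit
  omega

theorem stmt3_general (G : Type*) [Group G] [Finite G] (r : ℕ) (hr : r = Nat.card (IrrSet G))
    (hr2 : 2 ≤ r) (t : ℕ) (ht1 : 1 ≤ t)
    (hL : Nat.choose r t - Nat.choose (r - 2) (t - 1) + 1 ≤ Lt G t) :
    IsAlmostMonomial G := by
  by_contra hAM
  simp only [IsAlmostMonomial, not_forall, not_exists, not_and] at hAM
  obtain ⟨χ, φ, hχ, hφ, hne, hχφ⟩ := hAM
  have : Finite (IrrSet G) := Nat.finite_of_card_ne_zero (by omega)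
  set I := (Set.toFinite (IrrSet G)).toFinset
  have hI : #I = r := by rw [hr, Nat.card_eq_card_finite_toFinset]
  have hcount := Lt_le_card_filter_powersetCard (I := I) (Set.Finite.coe_toFinset _) t
    (fun s => χ ∈ s → φ ∈ s) fun f hf s hs => by
      simpa only [← Finset.mem_coe, hs] using mem_cons_of_mem_cons_of_inMG hφ hχφ hf
  have hbound := Finset.card_powersetCard_filter_imp_le (I := I)
    ((Set.Finite.mem_toFinset _).2 hχ) ((Set.Finite.mem_toFinset _).2 hφ) hne ht1
  rw [hI] at hbound
  omega

theorem stmt3 (G : Type*) [Group G] [Finite G] (r : ℕ) (hr : r = Nat.card (IrrSet G))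
    (hr2 : 2 ≤ r) (t : ℕ) (ht1 : 1 ≤ t) (ht2 : t ≤ r - 1)
    (hL : Nat.choose r t - Nat.choose (r - 2) (t - 1) + 1 ≤ Lt G t) :
    IsAlmostMonomial G :=
  stmt3_general G r hr hr2 t ht1 hL
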